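/- arXiv:2306.06481 — 2 statements merged into one kernel-verified Lean document; each statement's English description precedes it below -/
import Mathlib

section
/- Let N ∈ ℂ^{d×d} be upper Hessenberg and diagonalizable with pairwise distinct eigenvalues λ₁,…,λ_d, say N = X Λ X^{-1} with Λ = diag(λ₁,…,λ_d). Then for every i ∈ {1,…,d}, (e_d^T X e_i) · (e_i^T X^{-1} e₁) = (∏_{j=1}^{d−1} N_{j+1,j}) / ∏_{j≠i} (λ_i − λ_j). -/
/-!
Take `p = ∏_{j ≠ i} (X - λ_j)`, monic of degree `d - 1`. On one side
`p(N) = X p(Λ) X⁻¹` and `p(Λ)` vanishes except at the `i`-th diagonal entry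
`∏_{j ≠ i} (λ_i - λ_j)`, so `p(N)_{d,1} = X_{d,i} p(λ_i) X⁻¹_{i,1}`. On the other side,
the `k`-th power of a Hessenberg matrix vanishes below its `k`-th subdiagonal, so only
the leading term `N^{d-1}` of `p(N)` reaches the corner `(d, 1)`, where it equals the
product of the subdiagonal entries.
-/

open Matrix Finset Polynomial Lagrange

namespace Matrix

theorem aeval_diagonal {n R : Type*} [Fintype n] [DecidableEq n] [CommSemiring R]
    (v : n → R) (p : R[X]) :
    aeval (diagonal v) p = diagonal fun k => p.eval (v k) := by
  simpa [aeval_pi_apply] using aeval_algHom_apply (diagonalAlgHom R) v p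

theorem mul_diagonal_mul_apply {n R : Type*} [Fintype n] [DecidableEq n]
    [NonUnitalNonAssocSemiring R] (A B : Matrix n n R) (v : n → R) (i j : n) :
    (A * diagonal v * B) i j = ∑ k, A i k * v k * B k j := by
  rw [mul_apply]
  simp only [mul_diagonal]

section Conjugation

variable {n R : Type*} [Fintype n] [DecidableEq n] [CommRing R]

theorem conj_pow_of_isUnit_det (P A : Matrix n n R) (hP : IsUnit P.det) (k : ℕ) :
    (P * A * P⁻¹) ^ k = P * A ^ k * P⁻¹ := by
  induction k with
  | zero => simp [mul_nonsing_inv P hP]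
  | succ k ih =>
    calc (P * A * P⁻¹) ^ (k + 1) = P * A ^ k * (P⁻¹ * P) * A * P⁻¹ := by
          rw [pow_succ, ih]; noncomm_ring
      _ = P * A ^ (k + 1) * P⁻¹ := by rw [nonsing_inv_mul P hP, mul_one, pow_succ, mul_assoc P]

theorem aeval_conj_of_isUnit_det (P A : Matrix n n R) (hP : IsUnit P.det) (p : R[X]) :
    aeval (P * A * P⁻¹) p = P * aeval A p * P⁻¹ := by
  induction p using Polynomial.induction_on' with
  | add p q hp hq => rw [map_add, map_add, hp, hq, mul_add, add_mul]
  | monomial k a =>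
    simp only [aeval_monomial, conj_pow_of_isUnit_det P A hP, ← Algebra.smul_def,
      Matrix.mul_smul, Matrix.smul_mul]

end Conjugation

def IsUpperHessenberg {n : ℕ} {R : Type*} [Zero R] (N : Matrix (Fin n) (Fin n) R) : Prop :=
  ∀ i j : Fin n, (j : ℕ) + 1 < i → N i j = 0

namespace IsUpperHessenberg

variable {n : ℕ} {R : Type*} [CommSemiring R]

theorem pow_apply_eq_zero {N : Matrix (Fin n) (Fin n) R} (hN : N.IsUpperHessenberg) (m : ℕ)
    {i j : Fin n} (hij : (j : ℕ) + m < i) : (N ^ m) i j = 0 := by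
  induction m generalizing i with
  | zero => exact one_apply_ne (Fin.ne_of_gt hij)
  | succ m ih =>
    rw [pow_succ', mul_apply]
    refine sum_eq_zero fun k _ => ?_
    rcases lt_or_ge ((k : ℕ) + 1) i with hk | hk
    · rw [hN i k hk, zero_mul]
    · rw [ih (by omega), mul_zero]

theorem pow_apply_zero {N : Matrix (Fin (n + 1)) (Fin (n + 1)) R} (hN : N.IsUpperHessenberg)
    {m : ℕ} (hm : m ≤ n) :
    (N ^ m) ⟨m, by omega⟩ 0 = ∏ k : Fin m, N ⟨k + 1, by omega⟩ ⟨k, by omega⟩ := by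
  induction m with
  | zero => simp
  | succ m ih =>
    rw [pow_succ', mul_apply, sum_eq_single ⟨m, by omega⟩, ih (by omega), Fin.prod_univ_castSucc,
      mul_comm]
    · rfl
    · intro k _ hk
      rcases lt_or_ge ((k : ℕ) + 1) (m + 1) with hk' | hk'
      · rw [hN _ k hk', zero_mul]
      · have hkm : (k : ℕ) ≠ m := Fin.val_ne_iff.2 hk
        rw [hN.pow_apply_eq_zero m (by simp; omega), mul_zero]
    · simp

theorem aeval_apply_of_monic {N : Matrix (Fin n) (Fin n) R} (hN : N.IsUpperHessenberg)
    {p : R[X]} (hp : p.Monic) {i j : Fin n} (hij : (j : ℕ) + p.natDegree = i) :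
    aeval N p i j = (N ^ p.natDegree) i j := by
  rw [aeval_eq_sum_range, sum_range_succ, add_apply, sum_apply, sum_eq_zero, smul_apply,
    hp.coeff_natDegree, one_smul, zero_add]
  intro k hk
  rw [smul_apply, hN.pow_apply_eq_zero k (by simp at hk; omega), smul_zero]

theorem aeval_apply_last_zero {N : Matrix (Fin (n + 1)) (Fin (n + 1)) R}
    (hN : N.IsUpperHessenberg) {p : R[X]} (hp : p.Monic) (hdeg : p.natDegree = n) :
    aeval N p (Fin.last n) 0 = ∏ j : Fin n, N j.succ j.castSucc := by
  rw [hN.aeval_apply_of_monic hp (by simp [hdeg]), hdeg]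
  exact hN.pow_apply_zero le_rfl

end IsUpperHessenberg

end Matrix

-- The paper's `d × d` matrices are `(d + 1) × (d + 1)` here, indexed from `0`.
/-- For an upper Hessenberg matrix `N = X Λ X⁻¹` that is diagonalizable with
pairwise distinct eigenvalues, the products `α_i β_i = (e_dᵀ X e_i)(e_iᵀ X⁻¹ e₁)`
satisfy `α_i β_i = (∏_j N_{j+1,j}) / ∏_{j ≠ i} (λ_i - λ_j)`.
(The paper's `d` is written as `d+1`.) -/
theorem hessenberg_eigenvector_coefficients
    {d : ℕ}
    (N : Matrix (Fin (d + 1)) (Fin (d + 1)) ℂ)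
    (hHess : ∀ i j : Fin (d + 1), (j : ℕ) + 1 < (i : ℕ) → N i j = 0)
    (Xe : Matrix (Fin (d + 1)) (Fin (d + 1)) ℂ) (Λ : Fin (d + 1) → ℂ)
    (hXe : IsUnit Xe.det)
    (hdiag : N = Xe * diagonal Λ * Xe⁻¹)
    (hdistinct : Function.Injective Λ) :
    ∀ i : Fin (d + 1),
      Xe (Fin.last d) i * Xe⁻¹ i 0 =
        (∏ j : Fin d, N j.succ j.castSucc) / ∏ j ∈ univ.erase i, (Λ i - Λ j) := by
  intro i
  set p := nodal (univ.erase i) Λ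
  have hsubdiag : aeval N p (Fin.last d) 0 = ∏ j : Fin d, N j.succ j.castSucc :=
    IsUpperHessenberg.aeval_apply_last_zero hHess nodal_monic (by simp [p, natDegree_nodal])
  have heigen : aeval N p (Fin.last d) 0 = Xe (Fin.last d) i * p.eval (Λ i) * Xe⁻¹ i 0 := by
    rw [hdiag, aeval_conj_of_isUnit_det _ _ hXe, aeval_diagonal, mul_diagonal_mul_apply,
      sum_eq_single i]
    · intro k _ hk
      rw [eval_nodal_at_node (mem_erase.2 ⟨hk, mem_univ k⟩), mul_zero, zero_mul]
    · simp
  have hne : p.eval (Λ i) ≠ 0 :=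
    eval_nodal_not_at_node fun j hj => hdistinct.ne (mem_erase.1 hj).1.symm
  rw [← eval_nodal, eq_div_iff hne, ← hsubdiag, heigen]
  ring
end

section
/- Let A ∈ ℝ^{n×n} and b ∈ ℝⁿ, b ≠ 0. Suppose: (i) 𝒰_d ∈ ℝ^{n×d} has orthonormal columns and ℋ_d := 𝒰_d^T A 𝒰_d; (ii) U_d ∈ ℝ^{n×d}, u_{d+1} ∈ ℝⁿ, H_d ∈ ℝ^{d×d}, h_{d+1,d} ∈ ℝ satisfy A U_d = U_d H_d + h_{d+1,d} u_{d+1} e_d^T; (iii) U_d = 𝒰_d 𝒯_d with 𝒯_d upper triangular and invertible, 𝒯_d e₁ = e₁, and τ̂_d the (d,d) entry of 𝒯_d. Set v := −(h_{d+1,d}/τ̂_d) 𝒰_d^T u_{d+1} and assume ℋ_d + v e_d^T (viewed over ℂ) is diagonalizable: ℋ_d + v e_d^T = X Λ X^{-1}, Λ = diag(λ₁,…,λ_d), with α_i = e_d^T X e_i, β_i = e_i^T X^{-1} e₁. Then for every polynomial p ∈ ℂ[X], the truncated FOM approximation f_d^tr := U_d p(H_d) e₁ ‖b‖ and the full FOM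 approximation f_d^fom := 𝒰_d p(ℋ_d) e₁ ‖b‖ satisfy f_d^tr − f_d^fom = 𝒰_d (Σ_{i=1}^d α_i β_i · p[ℋ_d, λ_i]) v · ‖b‖. -/
/-!
Put `M := ℋ_d + v e_dᵀ`. Projecting `A U_d = U_d H_d + h u e_dᵀ` with `𝒰_dᵀ`, and using that the
last row of the upper triangular `𝒯_d` is `τ̂ e_dᵀ`, the choice of `v` makes the rank-one terms
cancel: `M 𝒯_d = 𝒯_d H_d`. Hence `p(M) 𝒯_d = 𝒯_d p(H_d)`, and since `𝒯_d e₁ = e₁` the truncated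
approximation is `𝒰_d p(M) e₁ ‖b‖`.

For the difference `p(M) − p(ℋ_d)`, expand `e₁ = ∑ β_i X e_i` in eigenvectors of `M`. If
`(K + v wᵀ) x = λ x`, then `(K − λ) x = −(wᵀx) v`, and factoring `p(K) − p(λ) = p[K, λ] (K − λ)`
gives `(p(K + v wᵀ) − p(K)) x = (wᵀx) p[K, λ] v`.
-/

open Matrix

noncomputable def eunorm {m : ℕ} (v : Fin m → ℝ) : ℝ := Real.sqrt (∑ i, (v i) ^ 2)

/-- The first-order divided-difference polynomial `p[·, λ] = (p - p(λ)) / (X - λ)`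
(exact division in `ℂ[X]`). -/
noncomputable def divDiffPoly (p : Polynomial ℂ) (lam : ℂ) : Polynomial ℂ :=
  (p - Polynomial.C (p.eval lam)) / (Polynomial.X - Polynomial.C lam)

open Polynomial

theorem divDiffPoly_mul_X_sub_C (p : ℂ[X]) (μ : ℂ) :
    divDiffPoly p μ * (X - C μ) = p - C (p.eval μ) := by
  rw [mul_comm, divDiffPoly, mul_div_eq_iff_isRoot]
  simp

theorem aeval_divDiffPoly_mul {S : Type*} [Ring S] [Algebra ℂ S] (p : ℂ[X]) (μ : ℂ) (a : S) :
    aeval a (divDiffPoly p μ) * (a - algebraMap ℂ S μ)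
      = aeval a p - algebraMap ℂ S (p.eval μ) := by
  simpa using congrArg (aeval a) (divDiffPoly_mul_X_sub_C p μ)

theorem SemiconjBy.aeval {R S : Type*} [CommSemiring R] [Semiring S] [Algebra R S] {a x y : S}
    (h : SemiconjBy a x y) (p : R[X]) : SemiconjBy a (aeval x p) (aeval y p) := by
  induction p using Polynomial.induction_on' with
  | add p q hp hq => simpa using hp.add_right hq
  | monomial k c =>
    simpa [aeval_monomial] using
      SemiconjBy.mul_right (Algebra.commute_algebraMap_right c a) (h.pow_right k)

namespace Matrix

theorem map_ofReal_mul {l m k : Type*} [Fintype m] (P : Matrix l m ℝ) (Q : Matrix m k ℝ) :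
    (P * Q).map Complex.ofReal = P.map Complex.ofReal * Q.map Complex.ofReal :=
  Matrix.map_mul (f := Complex.ofRealHom)

theorem map_vecMulVec {α β : Type*} {m n : Type*} [Mul α] [Mul β] (f : α → β)
    (hf : ∀ a b, f (a * b) = f a * f b) (v : m → α) (w : n → α) :
    (vecMulVec v w).map f = vecMulVec (fun i => f (v i)) (fun j => f (w j)) := by
  ext i j
  simp [vecMulVec_apply, hf]

variable {R : Type*} [CommRing R] {n : Type*} [Fintype n] [DecidableEq n]

theorem aeval_mulVec_of_mulVec_eq_smul {M : Matrix n n R} {x : n → R} {μ : R}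
    (h : M *ᵥ x = μ • x) (p : R[X]) : aeval M p *ᵥ x = p.eval μ • x := by
  induction p using Polynomial.induction_on with
  | C a => simp [Algebra.algebraMap_eq_smul_one, smul_mulVec]
  | add p q hp hq => simp [add_mulVec, hp, hq, add_smul]
  | monomial k a ih =>
    rw [pow_succ, ← mul_assoc, map_mul, aeval_X, ← mulVec_mulVec, h, mulVec_smul, ih, smul_smul,
      eval_mul_X, mul_comm]

theorem mulVec_col_of_mul_eq_mul_diagonal {M X : Matrix n n R} {Λ : n → R}
    (h : M * X = X * diagonal Λ) (i : n) : M *ᵥ X.col i = Λ i • X.col i := by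
  rw [← mulVec_single_one, mulVec_mulVec, h, ← mulVec_mulVec, diagonal_mulVec_single,
    ← smul_eq_mul, Pi.single_smul', mulVec_smul]

theorem IsUpperTriangular.single_one_vecMul_of_isTop {ι : Type*} [LinearOrder ι] [Fintype ι]
    [DecidableEq ι] {T : Matrix ι ι R} (hT : T.IsUpperTriangular) {j : ι} (hj : IsTop j) :
    Pi.single j 1 ᵥ* T = T j j • Pi.single j 1 := by
  ext i
  rcases eq_or_lt_of_le (hj i) with rfl | hij
  · simp
  · simp [hT hij, hij.ne]

theorem IsUpperTriangular.apply_self_ne_zero_of_det_ne_zero {ι : Type*} [LinearOrder ι]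
    [Fintype ι] {T : Matrix ι ι R} (hT : T.IsUpperTriangular) (hdet : T.det ≠ 0) (i : ι) :
    T i i ≠ 0 := fun hi =>
  hdet <| (det_of_isUpperTriangular hT).trans (Finset.prod_eq_zero (Finset.mem_univ i) hi)

theorem aeval_add_vecMulVec_sub_aeval_mulVec_of_mulVec_eq_smul {K : Matrix n n ℂ}
    {v w x : n → ℂ} {μ : ℂ} (hx : (K + vecMulVec v w) *ᵥ x = μ • x) (p : ℂ[X]) :
    (aeval (K + vecMulVec v w) p - aeval K p) *ᵥ x
      = (w ⬝ᵥ x) • (aeval K (divDiffPoly p μ) *ᵥ v) := by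
  have hK : K *ᵥ x - μ • x = -((w ⬝ᵥ x) • v) := by
    rw [add_mulVec, vecMulVec_mulVec, op_smul_eq_smul] at hx
    rw [← hx]
    abel
  have hfac := congrArg (· *ᵥ x) (aeval_divDiffPoly_mul p μ K)
  simp only [← mulVec_mulVec, sub_mulVec, Algebra.algebraMap_eq_smul_one, smul_mulVec,
    one_mulVec, hK] at hfac
  rw [sub_mulVec, aeval_mulVec_of_mulVec_eq_smul hx, ← neg_sub, ← hfac, mulVec_neg, mulVec_smul,
    neg_neg]

theorem aeval_add_vecMulVec_sub_aeval_mulVec {K X : Matrix n n ℂ} {Λ : n → ℂ} {v w : n → ℂ}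
    (hX : IsUnit X.det) (hdiag : K + vecMulVec v w = X * diagonal Λ * X⁻¹) (p : ℂ[X])
    (y : n → ℂ) :
    (aeval (K + vecMulVec v w) p - aeval K p) *ᵥ y
      = (∑ i, ((w ᵥ* X) i * (X⁻¹ *ᵥ y) i) • aeval K (divDiffPoly p (Λ i))) *ᵥ v := by
  have hcol : (K + vecMulVec v w) * X = X * diagonal Λ := by
    rw [hdiag, Matrix.mul_assoc _ X⁻¹, nonsing_inv_mul X hX, Matrix.mul_one]
  have hy : y = ∑ i, (X⁻¹ *ᵥ y) i • X.col i := by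
    conv_lhs => rw [← one_mulVec y, ← mul_nonsing_inv X hX, ← mulVec_mulVec, mulVec_eq_sum]
    simp only [op_smul_eq_smul]
    rfl
  conv_lhs => rw [hy]
  rw [mulVec_sum, sum_mulVec]
  refine Finset.sum_congr rfl fun i _ => ?_
  rw [mulVec_smul, aeval_add_vecMulVec_sub_aeval_mulVec_of_mulVec_eq_smul
    (mulVec_col_of_mul_eq_mul_diagonal hcol i), smul_smul, smul_mulVec,
    mul_comm]
  rfl

theorem transpose_mul_mul_add_vecMulVec_mul_eq {m k : Type*} [Fintype m] [Fintype k]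
    [DecidableEq k]
    {A : Matrix m m R} {cU U : Matrix m k R} {T H : Matrix k k R} {u : m → R} {v w : k → R}
    {h τ : R} (hcU : cUᵀ * cU = 1) (hrel : A * U = U * H + h • vecMulVec u w)
    (hU : U = cU * T) (hw : w ᵥ* T = τ • w) (hv : τ • v = -(h • cUᵀ *ᵥ u)) :
    (cUᵀ * A * cU + vecMulVec v w) * T = T * H := by
  have hproj : cUᵀ * A * cU * T = T * H + h • vecMulVec (cUᵀ *ᵥ u) w := by
    calc cUᵀ * A * cU * T = cUᵀ * (cU * T * H + h • vecMulVec u w) := by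
          rw [← hU, ← hrel, hU]; simp only [Matrix.mul_assoc]
      _ = T * H + h • vecMulVec (cUᵀ *ᵥ u) w := by
          rw [Matrix.mul_add, ← Matrix.mul_assoc, ← Matrix.mul_assoc, hcU, Matrix.one_mul,
            Matrix.mul_smul, mul_vecMulVec]
  have hrank : vecMulVec v w * T = -(h • vecMulVec (cUᵀ *ᵥ u) w) := by
    rw [vecMulVec_mul, hw, vecMulVec_smul, ← smul_vecMulVec, hv, neg_vecMulVec, smul_vecMulVec]
  rw [Matrix.add_mul, hproj, hrank, add_neg_cancel_right]

end Matrix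

theorem truncated_minus_full_fom_general
    {n d : ℕ}
    (A : Matrix (Fin n) (Fin n) ℝ) (b : Fin n → ℝ)
    (cU : Matrix (Fin n) (Fin (d + 1)) ℝ) (hcU : cUᵀ * cU = 1)
    (U : Matrix (Fin n) (Fin (d + 1)) ℝ) (u : Fin n → ℝ)
    (H : Matrix (Fin (d + 1)) (Fin (d + 1)) ℝ) (h : ℝ)
    (hrel : A * U = U * H + h • vecMulVec u (Pi.single (Fin.last d) 1 : Fin (d + 1) → ℝ))
    (cT : Matrix (Fin (d + 1)) (Fin (d + 1)) ℝ)
    (hcTupper : ∀ i j : Fin (d + 1), j < i → cT i j = 0)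
    (hcTdet : cT.det ≠ 0)
    (hcTe1 : cT.mulVec (Pi.single 0 1 : Fin (d + 1) → ℝ) = (Pi.single 0 1 : Fin (d + 1) → ℝ))
    (hU : U = cU * cT)
    (v : Fin (d + 1) → ℝ)
    (hv : v = -(h / cT (Fin.last d) (Fin.last d)) • cUᵀ.mulVec u)
    (Xe : Matrix (Fin (d + 1)) (Fin (d + 1)) ℂ) (Λ : Fin (d + 1) → ℂ)
    (hXe : IsUnit Xe.det)
    (hdiag : (cUᵀ * A * cU).map Complex.ofReal
        + vecMulVec (fun i => (v i : ℂ)) (Pi.single (Fin.last d) 1 : Fin (d + 1) → ℂ)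
      = Xe * diagonal Λ * Xe⁻¹)
    (p : Polynomial ℂ) :
    eunorm b • ((U.map Complex.ofReal).mulVec
        ((Polynomial.aeval (H.map Complex.ofReal) p).mulVec
          (Pi.single 0 1 : Fin (d + 1) → ℂ)))
      - eunorm b • ((cU.map Complex.ofReal).mulVec
        ((Polynomial.aeval ((cUᵀ * A * cU).map Complex.ofReal) p).mulVec
          (Pi.single 0 1 : Fin (d + 1) → ℂ)))
    = eunorm b • ((cU.map Complex.ofReal).mulVec
        ((∑ i, (Xe (Fin.last d) i * Xe⁻¹ i 0) •
            Polynomial.aeval ((cUᵀ * A * cU).map Complex.ofReal) (divDiffPoly p (Λ i))).mulVec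
          (fun i => (v i : ℂ)))) := by
  set e₀ : Fin (d + 1) → ℂ := Pi.single 0 1
  have hT : cT.IsUpperTriangular := fun i j hij => hcTupper i j hij
  have hτ := hT.apply_self_ne_zero_of_det_ne_zero hcTdet (Fin.last d)
  have hintertwine : (cUᵀ * A * cU + vecMulVec v (Pi.single (Fin.last d) 1)) * cT = cT * H :=
    transpose_mul_mul_add_vecMulVec_mul_eq hcU hrel hU
      (hT.single_one_vecMul_of_isTop fun i => Fin.le_last i)
      (by rw [hv, smul_smul, mul_neg, mul_div_cancel₀ _ hτ, neg_smul])
  have hintertwineC : ((cUᵀ * A * cU).map Complex.ofReal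
      + vecMulVec (fun i => (v i : ℂ)) (Pi.single (Fin.last d) 1)) * cT.map Complex.ofReal
      = cT.map Complex.ofReal * H.map Complex.ofReal := by
    rw [← map_ofReal_mul, ← hintertwine, map_ofReal_mul (_ + _), Matrix.map_add _ Complex.ofReal_add,
      map_vecMulVec _ Complex.ofReal_mul]
    congr
    ext j
    simp [Pi.single_apply, apply_ite Complex.ofReal]
  have he₀ : cT.map Complex.ofReal *ᵥ e₀ = e₀ := by
    ext i
    simpa [e₀, mulVec_single_one, Pi.single_apply, apply_ite Complex.ofReal] using
      congrArg Complex.ofReal (congrFun hcTe1 i)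
  have htrunc : U.map Complex.ofReal *ᵥ (aeval (H.map Complex.ofReal) p *ᵥ e₀)
      = cU.map Complex.ofReal *ᵥ (aeval ((cUᵀ * A * cU).map Complex.ofReal
        + vecMulVec (fun i => (v i : ℂ)) (Pi.single (Fin.last d) 1)) p *ᵥ e₀) := by
    rw [hU, map_ofReal_mul, ← mulVec_mulVec, mulVec_mulVec _ (cT.map _),
      (SemiconjBy.aeval hintertwineC.symm p).eq, ← mulVec_mulVec, he₀]
  rw [htrunc, ← smul_sub, ← mulVec_sub, ← sub_mulVec,
    aeval_add_vecMulVec_sub_aeval_mulVec hXe hdiag]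
  simp [e₀]

/-- **Corollary 6.2 (polynomial version): truncated vs. full FOM.**
With `ℋ = cUᵀ A cU`, `A U = U H + h u e_dᵀ`, `U = cU cT` (`cT` upper triangular,
invertible, `cT e₁ = e₁`, `(d,d)` entry `τ̂`), `v = -(h/τ̂) cUᵀ u`, and a
diagonalization `ℋ + v e_dᵀ = X Λ X⁻¹` over `ℂ` with `α_i = e_dᵀ X e_i`,
`β_i = e_iᵀ X⁻¹ e₁`, the truncated FOM approximation `U p(H) e₁ ‖b‖` and the full
FOM approximation `cU p(ℋ) e₁ ‖b‖` differ by `cU (∑ i α_i β_i p[ℋ, λ_i]) v ‖b‖`.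
(The paper's `d` is `d+1` here.) -/
theorem truncated_minus_full_fom
    {n d : ℕ}
    (A : Matrix (Fin n) (Fin n) ℝ) (b : Fin n → ℝ) (hb : b ≠ 0)
    (cU : Matrix (Fin n) (Fin (d + 1)) ℝ) (hcU : cUᵀ * cU = 1)
    (U : Matrix (Fin n) (Fin (d + 1)) ℝ) (u : Fin n → ℝ)
    (H : Matrix (Fin (d + 1)) (Fin (d + 1)) ℝ) (h : ℝ)
    (hrel : A * U = U * H + h • vecMulVec u (Pi.single (Fin.last d) 1 : Fin (d + 1) → ℝ))
    (cT : Matrix (Fin (d + 1)) (Fin (d + 1)) ℝ)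
    (hcTupper : ∀ i j : Fin (d + 1), j < i → cT i j = 0)
    (hcTdet : cT.det ≠ 0)
    (hcTe1 : cT.mulVec (Pi.single 0 1 : Fin (d + 1) → ℝ) = (Pi.single 0 1 : Fin (d + 1) → ℝ))
    (hU : U = cU * cT)
    (v : Fin (d + 1) → ℝ)
    (hv : v = -(h / cT (Fin.last d) (Fin.last d)) • cUᵀ.mulVec u)
    (Xe : Matrix (Fin (d + 1)) (Fin (d + 1)) ℂ) (Λ : Fin (d + 1) → ℂ)
    (hXe : IsUnit Xe.det)
    (hdiag : (cUᵀ * A * cU).map Complex.ofReal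
        + vecMulVec (fun i => (v i : ℂ)) (Pi.single (Fin.last d) 1 : Fin (d + 1) → ℂ)
      = Xe * diagonal Λ * Xe⁻¹)
    (p : Polynomial ℂ) :
    eunorm b • ((U.map Complex.ofReal).mulVec
        ((Polynomial.aeval (H.map Complex.ofReal) p).mulVec
          (Pi.single 0 1 : Fin (d + 1) → ℂ)))
      - eunorm b • ((cU.map Complex.ofReal).mulVec
        ((Polynomial.aeval ((cUᵀ * A * cU).map Complex.ofReal) p).mulVec
          (Pi.single 0 1 : Fin (d + 1) → ℂ)))
    = eunorm b • ((cU.map Complex.ofReal).mulVec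
        ((∑ i, (Xe (Fin.last d) i * Xe⁻¹ i 0) •
            Polynomial.aeval ((cUᵀ * A * cU).map Complex.ofReal) (divDiffPoly p (Λ i))).mulVec
          (fun i => (v i : ℂ)))) :=
  truncated_minus_full_fom_general A b cU hcU U u H h hrel cT hcTupper hcTdet hcTe1 hU v hv Xe Λ hXe
    hdiag p
end
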